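/- arXiv:2210.04752 — 4 statements merged into one kernel-verified Lean document; each statement's English description precedes it below -/
import Mathlib

section
/- Let A be a compact normal bounded operator on a complex Hilbert space H, written in its canonical form A = Σ_{n∈S} λₙ Pₙ, where S ⊂ ℕ₀ with 0 ∈ S, the λₙ (n ∈ S \ {0}) are the distinct non-zero eigenvalues of A, λ₀ = 0, P₀ is the orthogonal projection onto ker A, and for n ≠ 0 the Pₙ are the mutually orthogonal Riesz (eigenspace) projections onto the eigenspaces of λₙ. Then for every g ∈ H, the closure of the Krylov subspace K(A,g) equals the closed linear span of the vectors { Pₙ g : n ∈ S }. -/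
/-!
Every `Aᵏ g = ∑ₙ λₙᵏ Pₙ g` lies in the closed span of the `Pₙ g`. Conversely, if `h ⊥ K(A, g)`,
then `bₙ = ⟪h, Pₙ g⟫` is absolutely summable (Bessel) and has vanishing moments
`∑ₙ λₙᵏ bₙ = ⟪h, Aᵏ g⟫ = 0`. Since the `λₙ` are distinct and, on the support of `b`, only
accumulate at `0`, multiplying `b` by a polynomial killing the finitely many other nodes of modulus
`≥ |λₙ| / 2` leaves `λₙ` strictly dominant, and dividing the moments by `λₙᵏ` forces `bₙ = 0`.
Hence every `Pₙ g` lies in `K(A, g)ᗮᗮ`, the closure of `K(A, g)`.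
-/

open Filter Topology
open scoped InnerProductSpace Polynomial

section Moments

variable {ι 𝕜 : Type*} [RCLike 𝕜] {μ b : ι → 𝕜}

theorem hasSum_pow_mul_eval_mul (hmom : ∀ k, HasSum (fun i => μ i ^ k * b i) 0)
    (p : 𝕜[X]) (k : ℕ) : HasSum (fun i => μ i ^ k * (p.eval (μ i) * b i)) 0 := by
  induction p using Polynomial.induction_on' with
  | add p q hp hq => simpa [add_mul, mul_add] using hp.add hq
  | monomial n a =>
    simpa [pow_add, mul_comm, mul_left_comm, mul_assoc] using (hmom (k + n)).mul_left a

theorem summable_norm_eval_mul (hb : Summable (‖b ·‖))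
    (hfin : {i | 1 ≤ ‖μ i‖ ∧ b i ≠ 0}.Finite) (p : 𝕜[X]) :
    Summable fun i => ‖p.eval (μ i) * b i‖ := by
  obtain ⟨R, hR⟩ := (hfin.image (‖μ ·‖)).bddAbove
  obtain ⟨M, hM⟩ := (isCompact_closedBall (0 : 𝕜) (max 1 R)).exists_bound_of_continuousOn
    p.continuous.continuousOn
  refine .of_nonneg_of_le (fun _ => norm_nonneg _) (fun i => ?_) (hb.mul_left M)
  rw [norm_mul]
  by_cases hbi : b i = 0
  · simp [hbi]
  have hμi : ‖μ i‖ ≤ max 1 R := by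
    by_cases h1 : 1 ≤ ‖μ i‖
    · exact le_max_of_le_right (hR ⟨i, ⟨h1, hbi⟩, rfl⟩)
    · exact le_max_of_le_left (not_le.mp h1).le
  exact mul_le_mul_of_nonneg_right (hM _ (mem_closedBall_zero_iff.mpr hμi)) (norm_nonneg _)

theorem eq_zero_of_hasSum_pow_mul_of_norm_le {c : ι → 𝕜} {j : ι} {ρ : ℝ}
    (hc : Summable (‖c ·‖)) (hρ : 0 ≤ ρ) (hρj : ρ < ‖μ j‖)
    (hsmall : ∀ i ≠ j, c i ≠ 0 → ‖μ i‖ ≤ ρ)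
    (hmom : ∀ k, HasSum (fun i => μ i ^ k * c i) 0) : c j = 0 := by
  classical
  have hbound : ∀ k : ℕ, ‖μ j‖ ^ k * ‖c j‖ ≤ ρ ^ k * ∑' i, ‖c i‖ := by
    intro k
    have hterm : ∀ i, ‖Function.update (fun i => μ i ^ k * c i) j 0 i‖ ≤ ρ ^ k * ‖c i‖ := by
      intro i
      rcases eq_or_ne i j with rfl | hij
      · simp only [Function.update_self, norm_zero]; positivity
      rw [Function.update_of_ne hij, norm_mul, norm_pow]
      rcases eq_or_ne (c i) 0 with hci | hci
      · simp [hci]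
      exact mul_le_mul_of_nonneg_right (pow_le_pow_left₀ (norm_nonneg _) (hsmall i hij hci) k)
        (norm_nonneg _)
    simpa using ((hmom k).update j 0).norm_le_of_bounded (hc.hasSum.mul_left (ρ ^ k)) hterm
  have hμj : 0 < ‖μ j‖ := hρ.trans_lt hρj
  have hlim : Tendsto (fun k : ℕ => (ρ / ‖μ j‖) ^ k * ∑' i, ‖c i‖) atTop (𝓝 0) := by
    simpa using (tendsto_pow_atTop_nhds_zero_of_lt_one (by positivity)
      ((div_lt_one hμj).mpr hρj)).mul_const (∑' i, ‖c i‖)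
  refine norm_le_zero_iff.mp (ge_of_tendsto' hlim fun k => ?_)
  rw [div_pow, div_mul_eq_mul_div, le_div_iff₀ (by positivity), mul_comm]
  exact hbound k

theorem eq_zero_of_hasSum_pow_mul_eq_zero (hμ : Function.Injective μ) (hb : Summable (‖b ·‖))
    (hfin : ∀ r > 0, {i | r ≤ ‖μ i‖ ∧ b i ≠ 0}.Finite)
    (hmom : ∀ k, HasSum (fun i => μ i ^ k * b i) 0) : b = 0 := by
  classical
  have hne : ∀ j, μ j ≠ 0 → b j = 0 := by
    intro j hμj
    by_contra hbj
    have hr : 0 < ‖μ j‖ / 2 := by positivity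
    -- `p` annihilates every other node of modulus `≥ ‖μ j‖ / 2`, leaving `j` dominant.
    set F := (hfin _ hr).toFinset.erase j
    set p : 𝕜[X] := ∏ i ∈ F, (Polynomial.X - Polynomial.C (μ i))
    have heval : ∀ i, p.eval (μ i) = ∏ l ∈ F, (μ i - μ l) := by
      simp [p, Polynomial.eval_prod]
    have hpj : p.eval (μ j) ≠ 0 := by
      rw [heval, Finset.prod_ne_zero_iff]
      exact fun l hl => sub_ne_zero.mpr (hμ.ne (Finset.ne_of_mem_erase hl).symm)
    refine mul_ne_zero hpj hbj <|
      eq_zero_of_hasSum_pow_mul_of_norm_le (c := fun i => p.eval (μ i) * b i)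
        (summable_norm_eval_mul hb (hfin 1 one_pos) p) hr.le (half_lt_self (by positivity))
        (fun i hij hci => ?_) (hasSum_pow_mul_eval_mul hmom p)
    by_contra hlt
    have hiF : i ∈ F := Finset.mem_erase.mpr
      ⟨hij, (hfin _ hr).mem_toFinset.mpr ⟨(not_le.mp hlt).le, right_ne_zero_of_mul hci⟩⟩
    exact left_ne_zero_of_mul hci (heval i ▸ Finset.prod_eq_zero hiF (sub_self _))
  funext j
  by_cases hμj : μ j = 0
  · have hsingle : HasSum b (b j) := hasSum_single j fun i hij =>
      hne i fun hμi => hij (hμ (hμi.trans hμj.symm))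
    simpa using hsingle.unique (by simpa using hmom 0)
  · exact hne j hμj

end Moments

theorem IsIdempotentElem.one_le_norm {R : Type*} [NormedRing R] {p : R} (hp : IsIdempotentElem p)
    (h0 : p ≠ 0) : 1 ≤ ‖p‖ := by
  have hpos : 0 < ‖p‖ := norm_pos_iff.mpr h0
  have : ‖p‖ ≤ ‖p‖ * ‖p‖ := by simpa only [hp.eq] using norm_mul_le p p
  nlinarith

theorem Submodule.hasSum_mem_topologicalClosure {R M ι : Type*} [Semiring R] [TopologicalSpace M]
    [AddCommMonoid M] [Module R M] [ContinuousAdd M] [ContinuousConstSMul R M]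
    {K : Submodule R M} {f : ι → M} {x : M} (hf : HasSum f x) (hK : ∀ i, f i ∈ K) :
    x ∈ K.topologicalClosure :=
  mem_closure_of_tendsto hf (.of_forall fun _ => K.sum_mem fun i _ => hK i)

theorem pow_apply_eq_pow_smul {R M : Type*} [Semiring R] [TopologicalSpace M] [AddCommMonoid M]
    [Module R M] {A : M →L[R] M} {c : R} {v : M} (h : A v = c • v) (k : ℕ) :
    (A ^ k) v = c ^ k • v := by
  induction k with
  | zero => simp
  | succ k ih => rw [pow_succ', mul_apply_eq_comp, ih, map_smul, h, smul_smul, pow_succ]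

section Projections

variable {𝕜 E ι : Type*} [RCLike 𝕜] [NormedAddCommGroup E] [InnerProductSpace 𝕜 E]
  [CompleteSpace E]

theorem IsStarProjection.inner_apply_right {p : E →L[𝕜] E} (hp : IsStarProjection p) (x y : E) :
    ⟪x, p y⟫_𝕜 = ⟪p x, p y⟫_𝕜 := by
  have h := hp.isSelfAdjoint.isSymmetric x (p y)
  rw [ContinuousLinearMap.coe_coe, ← mul_apply_eq_comp, hp.isIdempotentElem.eq] at h
  exact h.symm

variable {P : ι → E →L[𝕜] E}

theorem hasSum_norm_sq_apply (hP : ∀ i, IsStarProjection (P i)) {x : E}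
    (hx : HasSum (fun i => P i x) x) : HasSum (fun i => ‖P i x‖ ^ 2) (‖x‖ ^ 2) := by
  have h := hx.mapL (innerSL 𝕜 x)
  simp only [innerSL_apply_apply, (hP _).inner_apply_right x, inner_self_eq_norm_sq_to_K] at h
  exact_mod_cast h

theorem summable_norm_inner_apply (hP : ∀ i, IsStarProjection (P i))
    (hres : ∀ x, HasSum (fun i => P i x) x) (x y : E) :
    Summable fun i => ‖⟪x, P i y⟫_𝕜‖ := by
  refine .of_nonneg_of_le (fun _ => norm_nonneg _) (fun i => ?_)
    (((hasSum_norm_sq_apply hP (hres x)).add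
      (hasSum_norm_sq_apply hP (hres y))).summable.div_const 2)
  rw [(hP i).inner_apply_right]
  nlinarith [norm_inner_le_norm (𝕜 := 𝕜) (P i x) (P i y), sq_nonneg (‖P i x‖ - ‖P i y‖)]

end Projections

section Krylov

open Submodule

variable {𝕜 E ι : Type*} [RCLike 𝕜] [NormedAddCommGroup E] [InnerProductSpace 𝕜 E]
  {A : E →L[𝕜] E} {P : ι → E →L[𝕜] E} {lam : ι → 𝕜} {g : E}

theorem hasSum_pow_apply (hAP : ∀ i x, A (P i x) = lam i • P i x)
    (hg : HasSum (fun i => P i g) g) (k : ℕ) :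
    HasSum (fun i => lam i ^ k • P i g) ((A ^ k) g) := by
  simpa only [pow_apply_eq_pow_smul (hAP _ g)] using hg.mapL (A ^ k)

theorem topologicalClosure_span_pow_apply_le (hAP : ∀ i x, A (P i x) = lam i • P i x)
    (hg : HasSum (fun i => P i g) g) :
    (span 𝕜 (Set.range fun k : ℕ => (A ^ k) g)).topologicalClosure
      ≤ (span 𝕜 (Set.range fun i => P i g)).topologicalClosure := by
  refine topologicalClosure_minimal _ (span_le.mpr ?_) (isClosed_topologicalClosure _)
  rintro _ ⟨k, rfl⟩
  exact hasSum_mem_topologicalClosure (hasSum_pow_apply hAP hg k)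
    fun i => smul_mem _ _ (subset_span ⟨i, rfl⟩)

theorem topologicalClosure_span_apply_le [CompleteSpace E] (hP : ∀ i, IsStarProjection (P i))
    (hres : ∀ x, HasSum (fun i => P i x) x) (hAP : ∀ i x, A (P i x) = lam i • P i x)
    (hlam : Function.Injective lam) (hsum : Summable fun i => lam i • P i) :
    (span 𝕜 (Set.range fun i => P i g)).topologicalClosure
      ≤ (span 𝕜 (Set.range fun k : ℕ => (A ^ k) g)).topologicalClosure := by
  refine topologicalClosure_minimal _ (span_le.mpr ?_) (isClosed_topologicalClosure _)
  rintro _ ⟨i, rfl⟩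
  rw [← orthogonal_orthogonal_eq_closure]
  intro h hh
  have hmom : ∀ k, HasSum (fun i => lam i ^ k * ⟪h, P i g⟫_𝕜) 0 := by
    intro k
    have hk := (hasSum_pow_apply hAP (hres g) k).mapL (innerSL 𝕜 h)
    simp only [innerSL_apply_apply, inner_smul_right] at hk
    rwa [inner_eq_zero_symm.mp (hh _ (subset_span ⟨k, rfl⟩))] at hk
  have hfin : ∀ r > 0, {i | r ≤ ‖lam i‖ ∧ ⟪h, P i g⟫_𝕜 ≠ 0}.Finite := by
    intro r hr
    refine (mem_cofinite.mp (hsum.tendsto_cofinite_zero (Metric.ball_mem_nhds 0 hr))).subset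
      fun i ⟨hri, hi⟩ => ?_
    have hPi : P i ≠ 0 := fun h0 => hi (by simp [h0])
    simp only [Set.mem_compl_iff, Set.mem_preimage, mem_ball_zero_iff, not_lt, norm_smul]
    exact hri.trans
      (le_mul_of_one_le_right (norm_nonneg _) ((hP i).isIdempotentElem.one_le_norm hPi))
  exact congrFun
    (eq_zero_of_hasSum_pow_mul_eq_zero hlam (summable_norm_inner_apply hP hres h g) hfin hmom) i

end Krylov

theorem krylov_closure_eq_closed_span_eigenprojections_general
    {H : Type*} [NormedAddCommGroup H] [InnerProductSpace ℂ H] [CompleteSpace H]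
    (A : H →L[ℂ] H)
    (S : Set ℕ) (lam : ℕ → ℂ) (P : ℕ → H →L[ℂ] H)
    (hlam0 : lam 0 = 0)
    (hlam_inj : ∀ m ∈ S, ∀ n ∈ S, lam m = lam n → m = n)
    (hP_sa : ∀ n ∈ S, IsSelfAdjoint (P n))
    (hP_idem : ∀ n ∈ S, IsIdempotentElem (P n))
    (hP0 : LinearMap.range (P 0 : H →ₗ[ℂ] H) = LinearMap.ker (A : H →ₗ[ℂ] H))
    (hPeig : ∀ n ∈ S, n ≠ 0 →
      LinearMap.range (P n : H →ₗ[ℂ] H) = LinearMap.ker ((A - lam n • (1 : H →L[ℂ] H) : H →L[ℂ] H) : H →ₗ[ℂ] H))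
    (hAsum : HasSum (fun n : S => lam n • P n) A)
    (hres : ∀ x : H, HasSum (fun n : S => P n x) x)
    (g : H) :
    (Submodule.span ℂ (Set.range fun k : ℕ => (A ^ k) g)).topologicalClosure
      = (Submodule.span ℂ {x : H | ∃ n ∈ S, x = P n g}).topologicalClosure := by
  have hAP : ∀ (n : S) x, A (P n x) = lam n • P n x := by
    rintro ⟨n, hn⟩ x
    have hker : P n x ∈ LinearMap.ker ((A - lam n • 1 : H →L[ℂ] H) : H →ₗ[ℂ] H) := by
      rcases eq_or_ne n 0 with rfl | hn0
      · simp [hlam0, ← hP0]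
      · exact hPeig n hn hn0 ▸ LinearMap.mem_range_self (P n : H →ₗ[ℂ] H) x
    simpa [sub_eq_zero] using hker
  have hP : ∀ n : S, IsStarProjection (P n) := fun n => ⟨hP_idem n n.2, hP_sa n n.2⟩
  have hlam : Function.Injective fun n : S => lam n :=
    fun m n h => Subtype.ext (hlam_inj m m.2 n n.2 h)
  have hrange : {x : H | ∃ n ∈ S, x = P n g} = Set.range fun n : S => P n g := by
    ext x; simp [eq_comm]
  rw [hrange]
  exact le_antisymm (topologicalClosure_span_pow_apply_le hAP (hres g))
    (topologicalClosure_span_apply_le hP hres hAP hlam hAsum.summable)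

/-- For a compact normal operator `A = Σ_{n ∈ S} λₙ Pₙ` on a complex Hilbert
space (canonical decomposition: `λ₀ = 0`, the `λₙ`, `n ∈ S \ {0}`, distinct non-zero
eigenvalues, `Pₙ` the mutually orthogonal eigenprojections, `P₀` the orthogonal projection
onto `ker A`, `Σ Pₙ = 1` strongly) and any `g ∈ H`, the closure of the Krylov subspace
`K(A,g) = span{A^k g : k ∈ ℕ}` equals the closed span of `{Pₙ g : n ∈ S}`. -/
theorem krylov_closure_eq_closed_span_eigenprojections
    {H : Type*} [NormedAddCommGroup H] [InnerProductSpace ℂ H] [CompleteSpace H]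
    (A : H →L[ℂ] H) (hcpt : IsCompactOperator A) (hnormal : IsStarNormal A)
    (S : Set ℕ) (h0S : 0 ∈ S) (lam : ℕ → ℂ) (P : ℕ → H →L[ℂ] H)
    (hlam0 : lam 0 = 0)
    (hlam_ne : ∀ n ∈ S, n ≠ 0 → lam n ≠ 0)
    (hlam_inj : ∀ m ∈ S, ∀ n ∈ S, lam m = lam n → m = n)
    (hP_sa : ∀ n ∈ S, IsSelfAdjoint (P n))
    (hP_idem : ∀ n ∈ S, IsIdempotentElem (P n))
    (hP_orth : ∀ m ∈ S, ∀ n ∈ S, m ≠ n → P m * P n = 0)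
    (hP0 : LinearMap.range (P 0 : H →ₗ[ℂ] H) = LinearMap.ker (A : H →ₗ[ℂ] H))
    (hPeig : ∀ n ∈ S, n ≠ 0 →
      LinearMap.range (P n : H →ₗ[ℂ] H) = LinearMap.ker ((A - lam n • (1 : H →L[ℂ] H) : H →L[ℂ] H) : H →ₗ[ℂ] H))
    (hAsum : HasSum (fun n : S => lam n • P n) A)
    (hres : ∀ x : H, HasSum (fun n : S => P n x) x)
    (g : H) :
    (Submodule.span ℂ (Set.range fun k : ℕ => (A ^ k) g)).topologicalClosure
      = (Submodule.span ℂ {x : H | ∃ n ∈ S, x = P n g}).topologicalClosure :=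
  krylov_closure_eq_closed_span_eigenprojections_general A S lam P hlam0 hlam_inj hP_sa hP_idem hP0
    hPeig hAsum hres g
end

section
/- Let A be a bounded normal operator on a complex Hilbert space H and let g ∈ H. Then A is K(A,g)-reduced (i.e., both the closure of K(A,g) and K(A,g)^⊥ are invariant under A) if and only if A* g belongs to the closure of K(A,g). In particular, for A compact normal with canonical decomposition A = Σ_{n∈S} λₙ Pₙ, the vector A* g = Σ_{n∈S} conj(λₙ) Pₙ g lies in the closure of K(A,g) for every g ∈ H. -/
/-!
Let `M` be the closure of `K(A,g)`. It is always `A`-invariant and `K(A,g)ᗮ = Mᗮ`, so `A` is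
`K(A,g)`-reduced iff `M` is `A*`-invariant; since `A*` commutes with `A`, this happens iff
`A* g ∈ M`.

For compact normal `A` every closed `A`-invariant subspace `V` is `A*`-invariant. The eigenvectors
of `A` in `V` are eigenvectors of `A*`, so their span `K` is `A*`-invariant and `Kᗮ ⊓ V` is
`A`-invariant. The restriction of `A` to `Kᗮ ⊓ V` is compact and hyponormal (`‖T* x‖ ≤ ‖T x‖`).
A hyponormal operator satisfies `‖Tⁿ‖ = ‖T‖ⁿ`, so by Gelfand's formula its spectral radius is its
norm, and by the Fredholm alternative a compact one on a nonzero space has an eigenvector. Such an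
eigenvector would lie in both `K` and `Kᗮ`, hence `Kᗮ ⊓ V = 0` and `V` is the closure of `K`.
-/

open Filter Topology Module End Submodule

namespace ContinuousLinearMap

variable {𝕜 E : Type*} [RCLike 𝕜] [NormedAddCommGroup E] [InnerProductSpace 𝕜 E] [CompleteSpace E]

def IsHyponormal (T : E →L[𝕜] E) : Prop := ∀ x, ‖adjoint T x‖ ≤ ‖T x‖

theorem IsStarNormal.isHyponormal {T : E →L[𝕜] E} (hT : IsStarNormal T) : T.IsHyponormal :=
  fun x => (isStarNormal_iff_norm_eq_adjoint.mp hT x).ge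

theorem norm_adjoint_restrict_apply_le (T : E →L[𝕜] E) {V : Submodule 𝕜 E} [CompleteSpace V]
    (hV : ∀ x ∈ V, T x ∈ V) (x : V) : ‖adjoint (T.restrict hV) x‖ ≤ ‖adjoint T x‖ := by
  set y := adjoint (T.restrict hV) x
  have : ‖y‖ ^ 2 ≤ ‖adjoint T x‖ * ‖y‖ :=
    calc ‖y‖ ^ 2 = RCLike.re (inner 𝕜 (adjoint T x) (y : E)) := by
          rw [adjoint_inner_left, ← coe_restrict_apply hV y, ← Submodule.coe_inner,
            ← adjoint_inner_left, inner_self_eq_norm_sq]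
      _ ≤ ‖adjoint T x‖ * ‖y‖ := (RCLike.re_le_norm _).trans (norm_inner_le_norm _ _)
  nlinarith [norm_nonneg y, norm_nonneg (adjoint T x)]

theorem IsHyponormal.restrict {T : E →L[𝕜] E} (hT : T.IsHyponormal) {V : Submodule 𝕜 E}
    [CompleteSpace V] (hV : ∀ x ∈ V, T x ∈ V) : (T.restrict hV).IsHyponormal := fun x =>
  (T.norm_adjoint_restrict_apply_le hV x).trans (hT x)

theorem IsHyponormal.norm_pow_succ_apply_sq_le {T : E →L[𝕜] E} (hT : T.IsHyponormal) (n : ℕ)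
    (x : E) :
    ‖(T ^ (n + 1)) x‖ ^ 2 ≤ ‖(T ^ (n + 2)) x‖ * ‖(T ^ n) x‖ :=
  calc ‖(T ^ (n + 1)) x‖ ^ 2 = RCLike.re (inner 𝕜 (adjoint T ((T ^ (n + 1)) x)) ((T ^ n) x)) := by
        rw [adjoint_inner_left, pow_succ' T n, mul_apply_eq_comp, inner_self_eq_norm_sq]
    _ ≤ ‖adjoint T ((T ^ (n + 1)) x)‖ * ‖(T ^ n) x‖ :=
        (RCLike.re_le_norm _).trans (norm_inner_le_norm _ _)
    _ ≤ ‖(T ^ (n + 2)) x‖ * ‖(T ^ n) x‖ := by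
        rw [pow_succ' T (n + 1), mul_apply_eq_comp]
        gcongr
        exact hT _

theorem IsHyponormal.norm_pow_succ_sq_le {T : E →L[𝕜] E} (hT : T.IsHyponormal) (n : ℕ) :
    ‖T ^ (n + 1)‖ ^ 2 ≤ ‖T ^ (n + 2)‖ * ‖T ^ n‖ := by
  have hbound : ∀ x, ‖(T ^ (n + 1)) x‖ ≤ √(‖T ^ (n + 2)‖ * ‖T ^ n‖) * ‖x‖ := by
    intro x
    rw [← Real.sqrt_sq (norm_nonneg x), ← Real.sqrt_mul (by positivity)]
    apply Real.le_sqrt_of_sq_le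
    calc ‖(T ^ (n + 1)) x‖ ^ 2 ≤ ‖(T ^ (n + 2)) x‖ * ‖(T ^ n) x‖ :=
          hT.norm_pow_succ_apply_sq_le n x
      _ ≤ (‖T ^ (n + 2)‖ * ‖x‖) * (‖T ^ n‖ * ‖x‖) := by gcongr <;> exact le_opNorm _ _
      _ = _ := by ring
  calc ‖T ^ (n + 1)‖ ^ 2 ≤ √(‖T ^ (n + 2)‖ * ‖T ^ n‖) ^ 2 := by
        gcongr; exact opNorm_le_bound _ (Real.sqrt_nonneg _) hbound
    _ = _ := Real.sq_sqrt (by positivity)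

theorem IsHyponormal.norm_pow [Nontrivial E] {T : E →L[𝕜] E} (hT : T.IsHyponormal) (n : ℕ) :
    ‖T ^ n‖ = ‖T‖ ^ n := by
  suffices ∀ n, ‖T ^ n‖ = ‖T‖ ^ n ∧ ‖T ^ (n + 1)‖ = ‖T‖ ^ (n + 1) from (this n).1
  intro n
  induction n with
  | zero => simp
  | succ n ih =>
    refine ⟨ih.2, le_antisymm (norm_pow_le _ _) ?_⟩
    have h := hT.norm_pow_succ_sq_le n
    rw [ih.1, ih.2] at h
    rcases (norm_nonneg T).eq_or_lt with h0 | h0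
    · rw [← h0, zero_pow (by omega)]; exact norm_nonneg _
    · refine le_of_mul_le_mul_right ?_ (pow_pos h0 n)
      calc ‖T‖ ^ (n + 1 + 1) * ‖T‖ ^ n = (‖T‖ ^ (n + 1)) ^ 2 := by ring
        _ ≤ _ := h

theorem IsStarNormal.adjoint_apply_eq_of_apply_eq_smul {T : E →L[𝕜] E} (hT : IsStarNormal T)
    {c : 𝕜} {x : E} (hx : T x = c • x) : adjoint T x = starRingEnd 𝕜 c • x := by
  have hcomm : Commute T (star (c • 1 : E →L[𝕜] E)) := by
    rw [star_smul, star_one]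
    exact (Commute.one_right T).smul_right _
  have hN : IsStarNormal (T - c • 1) := hcomm.isStarNormal_sub
  have := (IsStarNormal.adjoint_apply_eq_zero_iff hN x).mpr (by simp [hx])
  simpa [sub_eq_zero, map_smulₛₗ, adjoint_one] using this

theorem IsStarNormal.iSup_inf_eigenspace_mem_invtSubmodule_adjoint {T : E →L[𝕜] E}
    (hT : IsStarNormal T) (V : Submodule 𝕜 E) :
    (⨆ μ, V ⊓ eigenspace (T : End 𝕜 E) μ) ∈ invtSubmodule (adjoint T : E →ₗ[𝕜] E) := by
  refine (mem_invtSubmodule _).mpr (iSup_le fun μ x hx => ?_)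
  have hx' : adjoint T x = starRingEnd 𝕜 μ • x :=
    IsStarNormal.adjoint_apply_eq_of_apply_eq_smul hT (mem_eigenspace_iff.mp hx.2)
  exact le_iSup (fun μ => V ⊓ eigenspace (T : End 𝕜 E) μ) μ (hx' ▸ smul_mem _ _ hx)

section Complex

variable {H : Type*} [NormedAddCommGroup H] [InnerProductSpace ℂ H] [CompleteSpace H]

theorem IsHyponormal.spectralRadius_eq_nnnorm [Nontrivial H] {T : H →L[ℂ] H}
    (hT : T.IsHyponormal) : spectralRadius ℂ T = ‖T‖₊ := by
  refine tendsto_nhds_unique (spectrum.pow_nnnorm_pow_one_div_tendsto_nhds_spectralRadius T) ?_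
  refine tendsto_const_nhds.congr' ?_
  filter_upwards [eventually_ne_atTop 0] with n hn
  have hpow : ‖T ^ n‖₊ = ‖T‖₊ ^ n := NNReal.eq (by simpa using hT.norm_pow n)
  rw [hpow, ENNReal.coe_pow, ← ENNReal.rpow_natCast, ← ENNReal.rpow_mul]
  simp [hn]

theorem IsHyponormal.exists_hasEigenvalue_of_isCompactOperator [Nontrivial H] {T : H →L[ℂ] H}
    (hT : T.IsHyponormal) (hc : IsCompactOperator T) : ∃ μ, HasEigenvalue (T : H →ₗ[ℂ] H) μ := by
  obtain ⟨z, hz, hzT⟩ := spectrum.exists_nnnorm_eq_spectralRadius T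
  rw [hT.spectralRadius_eq_nnnorm, ENNReal.coe_inj] at hzT
  by_cases hz0 : z = 0
  · have hT0 : T = 0 := nnnorm_eq_zero.mp (by simpa [hz0] using hzT.symm)
    exact ⟨0, by simp [hasEigenvalue_iff, hT0]⟩
  · exact ⟨z, (hc.hasEigenvalue_iff_mem_spectrum hz0).mpr hz⟩

theorem IsStarNormal.mem_invtSubmodule_adjoint_of_isCompactOperator {A : H →L[ℂ] H}
    (hN : IsStarNormal A) (hA : IsCompactOperator A) {V : Submodule ℂ H}
    (hV : IsClosed (V : Set H)) (hAV : V ∈ invtSubmodule (A : H →ₗ[ℂ] H)) :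
    V ∈ invtSubmodule (adjoint A : H →ₗ[ℂ] H) := by
  set K := ⨆ μ, V ⊓ eigenspace (A : End ℂ H) μ
  have hKV : K ≤ V := iSup_le fun _ => inf_le_left
  have hK : K ∈ invtSubmodule (adjoint A : H →ₗ[ℂ] H) :=
    IsStarNormal.iSup_inf_eigenspace_mem_invtSubmodule_adjoint hN V
  have hF : ∀ x ∈ Kᗮ ⊓ V, A x ∈ Kᗮ ⊓ V :=
    invtSubmodule.inf_mem (orthogonal_mem_invtSubmodule (by simpa using hK)) hAV
  have : CompleteSpace (Kᗮ ⊓ V : Submodule ℂ H) :=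
    (K.isClosed_orthogonal.inter hV).completeSpace_coe
  have hFbot : Kᗮ ⊓ V = ⊥ := by
    by_contra hne
    have : Nontrivial (Kᗮ ⊓ V : Submodule ℂ H) := nontrivial_iff_ne_bot.mpr hne
    have hT : (A.restrict hF).IsHyponormal := (IsStarNormal.isHyponormal hN).restrict hF
    obtain ⟨μ, hμ⟩ := hT.exists_hasEigenvalue_of_isCompactOperator (hA.restrict' hF)
    obtain ⟨w, hw⟩ := hμ.exists_hasEigenvector
    have hwK : (w : H) ∈ K := le_iSup (fun μ => V ⊓ eigenspace (A : End ℂ H) μ) μ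
      ⟨w.2.2, mem_eigenspace_iff.mpr (congrArg Subtype.val hw.apply_eq_smul)⟩
    exact hw.2 (Subtype.ext (inner_self_eq_zero.mp (inner_left_of_mem_orthogonal hwK w.2.1)))
  have : K.topologicalClosure.HasOrthogonalProjection :=
    HasOrthogonalProjection.ofCompleteSpace _
  have hVK : V ≤ K.topologicalClosure := by
    rw [← sup_orthogonal_inf_of_hasOrthogonalProjection (K.topologicalClosure_minimal hKV hV),
      orthogonal_closure, hFbot, sup_bot_eq]
  exact hVK.trans <| K.topologicalClosure_minimal (hK.trans (comap_mono hKV))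
    (hV.preimage (adjoint A).continuous)

end Complex

end ContinuousLinearMap

open ContinuousLinearMap

section Krylov

variable {𝕜 E : Type*} [NormedField 𝕜] [NormedAddCommGroup E] [NormedSpace 𝕜 E]
  (A : E →L[𝕜] E) (g : E)

def krylovSubspace : Submodule 𝕜 E :=
  span 𝕜 (Set.range fun k : ℕ => (A ^ k) g)

theorem pow_apply_mem_krylovSubspace (k : ℕ) : (A ^ k) g ∈ krylovSubspace A g :=
  subset_span ⟨k, rfl⟩

theorem self_mem_krylovSubspace : g ∈ krylovSubspace A g := by
  simpa using pow_apply_mem_krylovSubspace A g 0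

theorem krylovSubspace_mem_invtSubmodule :
    krylovSubspace A g ∈ invtSubmodule (A : E →ₗ[𝕜] E) := by
  refine span_le.mpr ?_
  rintro - ⟨k, rfl⟩
  change A ((A ^ k) g) ∈ krylovSubspace A g
  rw [← mul_apply_eq_comp, ← pow_succ']
  exact pow_apply_mem_krylovSubspace A g (k + 1)

theorem topologicalClosure_krylovSubspace_mem_invtSubmodule_of_commute {B : E →L[𝕜] E}
    (hBA : Commute B A) (hBg : B g ∈ (krylovSubspace A g).topologicalClosure) :
    (krylovSubspace A g).topologicalClosure ∈ invtSubmodule (B : E →ₗ[𝕜] E) := by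
  have hA := topologicalClosure_mem_invtSubmodule (krylovSubspace_mem_invtSubmodule A g)
  refine topologicalClosure_minimal _ (span_le.mpr ?_)
    ((isClosed_topologicalClosure _).preimage B.continuous)
  rintro - ⟨k, rfl⟩
  change B ((A ^ k) g) ∈ (krylovSubspace A g).topologicalClosure
  rw [← mul_apply_eq_comp, (hBA.pow_right k).eq, mul_apply_eq_comp, ← coe_coe, toLinearMap_pow]
  exact pow_apply_mem_of_forall_mem k hA _ hBg

end Krylov

/-- For a bounded normal operator `A` on a complex Hilbert space and
`g ∈ H`, `A` is `K(A,g)`-reduced (both the closure of `K(A,g) = span{A^k g : k ∈ ℕ}` and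
`K(A,g)^⊥` are `A`-invariant) if and only if `A* g` belongs to the closure of `K(A,g)`.
In particular, if `A` is in addition compact, then `A* g` lies in the closure of `K(A,g)`. -/
theorem krylov_reduced_iff_adjoint_apply_mem
    {H : Type*} [NormedAddCommGroup H] [InnerProductSpace ℂ H] [CompleteSpace H]
    (A : H →L[ℂ] H) (hnormal : IsStarNormal A) (g : H) :
    (((∀ x ∈ (Submodule.span ℂ (Set.range fun k : ℕ => (A ^ k) g)).topologicalClosure,
        A x ∈ (Submodule.span ℂ (Set.range fun k : ℕ => (A ^ k) g)).topologicalClosure) ∧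
      (∀ x ∈ (Submodule.span ℂ (Set.range fun k : ℕ => (A ^ k) g))ᗮ,
        A x ∈ (Submodule.span ℂ (Set.range fun k : ℕ => (A ^ k) g))ᗮ)) ↔
      ContinuousLinearMap.adjoint A g
        ∈ (Submodule.span ℂ (Set.range fun k : ℕ => (A ^ k) g)).topologicalClosure) ∧
    (IsCompactOperator A →
      ContinuousLinearMap.adjoint A g
        ∈ (Submodule.span ℂ (Set.range fun k : ℕ => (A ^ k) g)).topologicalClosure) := by
  set M := (krylovSubspace A g).topologicalClosure
  have hMA : M ∈ invtSubmodule (A : H →ₗ[ℂ] H) :=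
    topologicalClosure_mem_invtSubmodule (krylovSubspace_mem_invtSubmodule A g)
  have hgM : g ∈ M := le_topologicalClosure _ (self_mem_krylovSubspace A g)
  have hreduced : M ∈ invtSubmodule (adjoint A : H →ₗ[ℂ] H) ↔ adjoint A g ∈ M :=
    ⟨fun h => h hgM, topologicalClosure_krylovSubspace_mem_invtSubmodule_of_commute A g
      hnormal.star_comm_self⟩
  refine ⟨Iff.trans ?_ hreduced, fun hcompact => ?_⟩
  · rw [ContinuousLinearMap.mem_invtSubmodule_adjoint_iff, orthogonal_closure]
    exact ⟨fun h => h.2, fun h => ⟨hMA, h⟩⟩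
  · exact IsStarNormal.mem_invtSubmodule_adjoint_of_isCompactOperator hnormal hcompact
      (isClosed_topologicalClosure _) hMA hgM
end

section
/- Let A be a bounded normal operator on a complex Hilbert space H, let E be its projection-valued spectral measure supported on σ(A), let g ∈ H, and let μ_g be the finite positive regular Borel measure on σ(A) defined by μ_g(Ω) = ⟨E(Ω)g, g⟩. If A is K(A,g)-reduced, then the map f ↦ f(A)g, where f(A) = ∫_{σ(A)} f(z) dE(z) is given by the spectral (Borel) functional calculus, is a well-defined isometric linear bijection from L²(σ(A), μ_g) onto the closure of the Krylov subspace K(A,g). -/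
/-!
The monomials `zⁿ z̄ᵐ` in `L²(μ)` and the vectors `Aⁿ A*ᵐ g` in `H` have the same Gram matrix:
by normality `⟪Aⁿ A*ᵐ g, Aᵖ A*^q g⟫ = ⟪g, A^(m+p) A*^(n+q) g⟫`, which is the corresponding
moment of `μ`. As `μ` is carried by the compact set `σ(A)`, Stone–Weierstrass makes the monomials
span a dense subspace of `L²(μ)`, so matching them extends to a linear isometry `L²(μ) → H` whose
range is the closure of the span of the `Aⁿ A*ᵐ g`. Reducedness makes `A*` leave the closed Krylov
space invariant (it is the orthogonal complement of an `A`-invariant subspace), so this span has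
the same closure as `K(A, g)`.
-/

open Filter MeasureTheory Set Submodule
open scoped ENNReal

section StarMonomial

variable {R : Type*} [Monoid R] [StarMul R]

def starMonomial (x : R) (i : ℕ × ℕ) : R := x ^ i.1 * star x ^ i.2

lemma star_starMonomial_mul_starMonomial {x : R} (hx : Commute (star x) x) (i j : ℕ × ℕ) :
    star (starMonomial x i) * starMonomial x j = starMonomial x (i.2 + j.1, i.1 + j.2) := by
  simp only [starMonomial, star_mul, star_pow, star_star, pow_add]
  rw [mul_assoc, ← mul_assoc (star x ^ i.1), (hx.pow_pow i.1 j.1).eq]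
  simp only [mul_assoc]

lemma map_starMonomial {S F : Type*} [Monoid S] [StarMul S] [FunLike F R S]
    [MonoidHomClass F R S] [StarHomClass F R S] (φ : F) (x : R) (i : ℕ × ℕ) :
    φ (starMonomial x i) = starMonomial (φ x) i := by
  simp only [starMonomial, map_mul, map_pow, map_star]

end StarMonomial

section GramIsometry

variable {𝕜 ι E F : Type*} [RCLike 𝕜] [NormedAddCommGroup E] [InnerProductSpace 𝕜 E]
  [NormedAddCommGroup F] [InnerProductSpace 𝕜 F] {u : ι → E} {v : ι → F}

lemma norm_linearCombination_eq_of_inner_eq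
    (h : ∀ i j, inner 𝕜 (u i) (u j) = inner 𝕜 (v i) (v j)) (c : ι →₀ 𝕜) :
    ‖Finsupp.linearCombination 𝕜 v c‖ = ‖Finsupp.linearCombination 𝕜 u c‖ := by
  have : inner 𝕜 (Finsupp.linearCombination 𝕜 v c) (Finsupp.linearCombination 𝕜 v c) =
      inner 𝕜 (Finsupp.linearCombination 𝕜 u c) (Finsupp.linearCombination 𝕜 u c) := by
    simp only [Finsupp.linearCombination_apply, Finsupp.sum, sum_inner, inner_sum,
      inner_smul_left, inner_smul_right, h]
  rw [norm_eq_sqrt_re_inner (𝕜 := 𝕜), this, ← norm_eq_sqrt_re_inner]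

theorem exists_linearIsometry_of_inner_eq [CompleteSpace E] [CompleteSpace F]
    (hu : Dense (span 𝕜 (range u) : Set E))
    (h : ∀ i j, inner 𝕜 (u i) (u j) = inner 𝕜 (v i) (v j)) :
    ∃ T : E →ₗᵢ[𝕜] F, (∀ i, T (u i) = v i) ∧ range T = closure (span 𝕜 (range v) : Set F) := by
  set S := Finsupp.linearCombination 𝕜 u
  set P := Finsupp.linearCombination 𝕜 v
  have hS : DenseRange S := by
    rwa [DenseRange, ← LinearMap.coe_range, Finsupp.range_linearCombination]
  have hPS : ∀ c, P.extendOfNorm S (S c) = P c := LinearMap.extendOfNorm_eq hS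
    ⟨1, fun c => by rw [one_mul, norm_linearCombination_eq_of_inner_eq h]⟩
  have hnorm : ∀ x, ‖P.extendOfNorm S x‖ = ‖x‖ := by
    refine hS.induction ?_ (isClosed_eq (by fun_prop) continuous_norm)
    rintro _ ⟨c, rfl⟩
    rw [hPS, norm_linearCombination_eq_of_inner_eq h]
  have hPu : ∀ i, P.extendOfNorm S (u i) = v i := fun i => by
    simpa [S, P] using hPS (Finsupp.single i 1)
  let T : E →ₗᵢ[𝕜] F := ⟨P.extendOfNorm S, hnorm⟩
  refine ⟨T, hPu, Subset.antisymm ?_ ?_⟩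
  · calc range T = T '' closure (range S) := by rw [hS.closure_range, image_univ]
      _ ⊆ closure (T '' range S) := image_closure_subset_closure_image T.continuous
      _ = closure (span 𝕜 (range v)) := by
        rw [← range_comp, show ⇑T ∘ S = P from funext hPS, ← LinearMap.coe_range,
          Finsupp.range_linearCombination]
  · refine closure_minimal ?_ T.isometry.isClosedEmbedding.isClosed_range
    rw [← LinearIsometry.coe_toLinearMap, ← LinearMap.coe_range, SetLike.coe_subset_coe, span_le]
    rintro _ ⟨i, rfl⟩
    exact ⟨u i, hPu i⟩

end GramIsometry

namespace ContinuousMap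

section toLp

variable {X E : Type*} [TopologicalSpace X] [MeasurableSpace X] [OpensMeasurableSpace X]
  [NormedAddCommGroup E] [SecondCountableTopologyEither X E]
  {p : ℝ≥0∞} {μ : Measure X} [IsFiniteMeasure μ] {s : Set X}

lemma memLp_of_ae_mem (f : C(X, E)) (hs : IsCompact s) (hμ : ∀ᵐ x ∂μ, x ∈ s) :
    MemLp f p μ := by
  obtain ⟨C, hC⟩ := hs.exists_bound_of_continuousOn f.continuous.continuousOn
  exact MemLp.of_bound f.continuous.aestronglyMeasurable C (hμ.mono hC)

variable (p μ) (𝕜 : Type*) [NormedRing 𝕜] [Module 𝕜 E] [IsBoundedSMul 𝕜 E]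

noncomputable def toLpOfAEMem (hs : IsCompact s) (hμ : ∀ᵐ x ∂μ, x ∈ s) :
    C(X, E) →ₗ[𝕜] Lp E p μ where
  toFun f := (f.memLp_of_ae_mem hs hμ).toLp f
  map_add' _ _ := MemLp.toLp_add _ _
  map_smul' _ _ := MemLp.toLp_const_smul _ _

variable {p μ 𝕜}

lemma coeFn_toLpOfAEMem (hs : IsCompact s) (hμ : ∀ᵐ x ∂μ, x ∈ s) (f : C(X, E)) :
    toLpOfAEMem p μ 𝕜 hs hμ f =ᵐ[μ] f :=
  MemLp.coeFn_toLp (f.memLp_of_ae_mem hs hμ)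

lemma dist_toLpOfAEMem_le [Fact (1 ≤ p)] (hs : IsCompact s) (hμ : ∀ᵐ x ∂μ, x ∈ s)
    {f g : C(X, E)} {C : ℝ} (hC : 0 ≤ C) (hfg : ∀ x ∈ s, dist (f x) (g x) ≤ C) :
    dist (toLpOfAEMem p μ 𝕜 hs hμ f) (toLpOfAEMem p μ 𝕜 hs hμ g)
      ≤ measureUnivNNReal μ ^ p.toReal⁻¹ * C := by
  rw [dist_eq_norm, ← map_sub]
  refine Lp.norm_le_of_ae_bound hC ?_
  filter_upwards [coeFn_toLpOfAEMem (𝕜 := 𝕜) hs hμ (f - g), hμ] with x hx hxs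
  rw [hx, sub_apply, ← dist_eq_norm]
  exact hfg x hxs

end toLp

section inner

variable {X E 𝕜 : Type*} [TopologicalSpace X] [MeasurableSpace X] [OpensMeasurableSpace X]
  [RCLike 𝕜] [NormedAddCommGroup E] [InnerProductSpace 𝕜 E] [SecondCountableTopologyEither X E]
  {μ : Measure X} [IsFiniteMeasure μ] {s : Set X}

lemma inner_toLpOfAEMem (hs : IsCompact s) (hμ : ∀ᵐ x ∂μ, x ∈ s) (f g : C(X, E)) :
    inner 𝕜 (toLpOfAEMem 2 μ 𝕜 hs hμ f) (toLpOfAEMem 2 μ 𝕜 hs hμ g)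
      = ∫ x, inner 𝕜 (f x) (g x) ∂μ := by
  rw [L2.inner_def]
  refine integral_congr_ae ?_
  filter_upwards [coeFn_toLpOfAEMem (𝕜 := 𝕜) hs hμ f, coeFn_toLpOfAEMem (𝕜 := 𝕜) hs hμ g]
    with x hf hg
  rw [hf, hg]

end inner

end ContinuousMap

section Density

lemma starMonomial_id_apply (i : ℕ × ℕ) (z : ℂ) :
    starMonomial (ContinuousMap.id ℂ) i z = z ^ i.1 * (starRingEnd ℂ z) ^ i.2 := by
  simp [starMonomial]

lemma dense_span_starMonomial_restrict_id (s : Set ℂ) [CompactSpace s] :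
    Dense (span ℂ (range (starMonomial (ContinuousMap.restrict s (.id ℂ)))) : Set C(s, ℂ)) := by
  set z := ContinuousMap.restrict s (.id ℂ)
  have hpoly : ((polynomialFunctions s).starClosure : Set C(s, ℂ)) ⊆
      span ℂ (range (starMonomial z)) := by
    intro f hf
    rw [polynomialFunctions.starClosure_eq_adjoin_X, Polynomial.toContinuousMapOnAlgHom_apply,
      Polynomial.toContinuousMapOn_X_eq_restrict_id, SetLike.mem_coe,
      ← StarSubalgebra.mem_toSubalgebra, StarAlgebra.adjoin_toSubalgebra,
      ← Subalgebra.mem_toSubmodule, Algebra.adjoin_eq_span, Set.star_singleton,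
      Set.singleton_union] at hf
    refine span_mono ?_ hf
    rintro _ hm
    obtain ⟨n, m, rfl⟩ := (Submonoid.mem_closure_pair _ _ _).1 hm
    exact ⟨(n, m), rfl⟩
  refine Dense.mono hpoly (dense_iff_closure_eq.2 ?_)
  rw [← StarSubalgebra.topologicalClosure_coe, polynomialFunctions.starClosure_topologicalClosure,
    StarSubalgebra.coe_top]

theorem dense_span_toLpOfAEMem_starMonomial {p : ℝ≥0∞} [Fact (1 ≤ p)] (hp : p ≠ ∞)
    {μ : Measure ℂ} [IsFiniteMeasure μ] {s : Set ℂ} (hs : IsCompact s) (hμ : ∀ᵐ z ∂μ, z ∈ s) :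
    Dense (span ℂ (range fun i =>
      ContinuousMap.toLpOfAEMem p μ ℂ hs hμ (starMonomial (.id ℂ) i)) : Set (Lp ℂ p μ)) := by
  have : CompactSpace s := isCompact_iff_compactSpace.mp hs
  set L : C(ℂ, ℂ) →ₗ[ℂ] Lp ℂ p μ := ContinuousMap.toLpOfAEMem p μ ℂ hs hμ
  set R := (ContinuousMap.restrict s (.id ℂ)).compStarAlgHom' ℂ ℂ
  set M : ℝ := measureUnivNNReal μ ^ p.toReal⁻¹
  have hRspan : span ℂ (range (starMonomial (ContinuousMap.restrict s (.id ℂ)))) =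
      (span ℂ (range (starMonomial (.id ℂ)))).map R.toLinearMap := by
    rw [map_span, ← range_comp]
    exact congrArg _ (congrArg range (funext fun i => (map_starMonomial R _ i).symm))
  have hL : ∀ f : C(ℂ, ℂ), L f ∈ closure (span ℂ (range (L ∘ starMonomial (.id ℂ))) : Set _) := by
    intro f
    refine Metric.mem_closure_iff.2 fun ε hε => ?_
    obtain ⟨_, hq, hfq⟩ := Metric.mem_closure_iff.1
      (dense_span_starMonomial_restrict_id s (R f)) (ε / (M + 1)) (by positivity)
    rw [SetLike.mem_coe, hRspan] at hq
    obtain ⟨q, hq, rfl⟩ := hq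
    refine ⟨L q, by rw [range_comp, ← map_span]; exact mem_map_of_mem hq, ?_⟩
    calc dist (L f) (L q) ≤ M * (ε / (M + 1)) :=
          ContinuousMap.dist_toLpOfAEMem_le hs hμ (by positivity) fun z hz =>
            (ContinuousMap.dist_apply_le_dist (f := R f) (g := R q) ⟨z, hz⟩).trans hfq.le
      _ < ε := by
        rw [mul_div_assoc', div_lt_iff₀ (by positivity)]
        nlinarith
  refine dense_closure.mp ((BoundedContinuousFunction.toLp_denseRange ℂ μ ℂ hp).mono ?_)
  rintro _ ⟨f, rfl⟩
  have : BoundedContinuousFunction.toLp p μ ℂ f = L f.toContinuousMap :=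
    Lp.ext ((BoundedContinuousFunction.coeFn_toLp p μ ℂ f).trans
      (ContinuousMap.coeFn_toLpOfAEMem hs hμ _).symm)
  rw [this]
  exact hL _

end Density

section Krylov

variable {𝕜 H : Type*} [RCLike 𝕜] [NormedAddCommGroup H] [InnerProductSpace 𝕜 H]
  [CompleteSpace H]

lemma ContinuousLinearMap.adjoint_mem_topologicalClosure {K : Submodule 𝕜 H} {A : H →L[𝕜] H}
    (hA : ∀ x ∈ Kᗮ, A x ∈ Kᗮ) :
    ∀ x ∈ K.topologicalClosure, adjoint A x ∈ K.topologicalClosure := by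
  intro x hx
  rw [← orthogonal_orthogonal_eq_closure] at hx ⊢
  refine (mem_orthogonal _ _).2 fun y hy => ?_
  rw [ContinuousLinearMap.adjoint_inner_right]
  exact (mem_orthogonal _ _).1 hx (A y) (hA y hy)

lemma starMonomial_apply_mem {V : Submodule 𝕜 H} {A : H →L[𝕜] H} (hA : ∀ x ∈ V, A x ∈ V)
    (hA' : ∀ x ∈ V, star A x ∈ V) {x : H} (hx : x ∈ V) (i : ℕ × ℕ) :
    starMonomial A i x ∈ V := by
  have hpow : ∀ B : H →L[𝕜] H, (∀ x ∈ V, B x ∈ V) → ∀ n, ∀ x ∈ V, (B ^ n) x ∈ V :=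
    fun B hB n x hx => by
      simpa [← ContinuousLinearMap.toLinearMap_pow] using
        Module.End.pow_apply_mem_of_forall_mem (f' := (B : H →ₗ[𝕜] H)) n hB x hx
  exact hpow A hA _ _ (hpow _ hA' _ _ hx)

theorem closure_span_starMonomial_apply_eq {A : H →L[𝕜] H} {g : H}
    (hA₁ : ∀ x ∈ (span 𝕜 (range fun k : ℕ => (A ^ k) g)).topologicalClosure,
      A x ∈ (span 𝕜 (range fun k : ℕ => (A ^ k) g)).topologicalClosure)
    (hA₂ : ∀ x ∈ (span 𝕜 (range fun k : ℕ => (A ^ k) g))ᗮ,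
      A x ∈ (span 𝕜 (range fun k : ℕ => (A ^ k) g))ᗮ) :
    closure (span 𝕜 (range fun i => starMonomial A i g) : Set H)
      = closure (span 𝕜 (range fun k : ℕ => (A ^ k) g)) := by
  set K := span 𝕜 (range fun k : ℕ => (A ^ k) g)
  apply Subset.antisymm
  · refine closure_minimal ?_ isClosed_closure
    rw [← topologicalClosure_coe, SetLike.coe_subset_coe, span_le]
    rintro _ ⟨i, rfl⟩
    have hA' : ∀ x ∈ K.topologicalClosure, star A x ∈ K.topologicalClosure := by
      rw [ContinuousLinearMap.star_eq_adjoint]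
      exact ContinuousLinearMap.adjoint_mem_topologicalClosure hA₂
    exact starMonomial_apply_mem hA₁ hA' (K.le_topologicalClosure (subset_span ⟨0, by simp⟩)) i
  · refine closure_mono (span_le.2 ?_)
    rintro _ ⟨k, rfl⟩
    exact subset_span ⟨(k, 0), by simp [starMonomial]⟩

end Krylov

/-- Let `A` be a bounded normal operator on a complex Hilbert space,
`g ∈ H`, and let `μ` be the scalar spectral measure `μ_g(Ω) = ⟨E(Ω)g, g⟩` of `A` at `g`
(characterized here as the finite Borel measure supported on `σ(A)` whose moments satisfy
`∫ zⁿ conj(z)ᵐ dμ = ⟨g, Aⁿ(A*)ᵐ g⟩`, which uniquely determines it).  If `A` is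
`K(A,g)`-reduced, then the spectral-calculus map `f ↦ f(A)g` (the unique linear isometry
sending the class of `zⁿ conj(z)ᵐ` to `Aⁿ(A*)ᵐ g`) is a well-defined isometric linear
bijection from `L²(σ(A), μ_g)` onto the closure of the Krylov subspace
`K(A,g) = span{A^k g : k ∈ ℕ}`. -/
theorem krylov_reduced_L2_isomorphism
    {H : Type*} [NormedAddCommGroup H] [InnerProductSpace ℂ H] [CompleteSpace H]
    (A : H →L[ℂ] H) (hnormal : IsStarNormal A) (g : H)
    (hred₁ : ∀ x ∈ (Submodule.span ℂ (Set.range fun k : ℕ => (A ^ k) g)).topologicalClosure,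
      A x ∈ (Submodule.span ℂ (Set.range fun k : ℕ => (A ^ k) g)).topologicalClosure)
    (hred₂ : ∀ x ∈ (Submodule.span ℂ (Set.range fun k : ℕ => (A ^ k) g))ᗮ,
      A x ∈ (Submodule.span ℂ (Set.range fun k : ℕ => (A ^ k) g))ᗮ)
    (μ : Measure ℂ) [IsFiniteMeasure μ]
    (hμsupp : μ (spectrum ℂ A)ᶜ = 0)
    (hμmom : ∀ n m : ℕ,
      ∫ z : ℂ, z ^ n * (starRingEnd ℂ z) ^ m ∂μ
        = @inner ℂ _ _ g (((A ^ n) * ((ContinuousLinearMap.adjoint A) ^ m)) g)) :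
    ∃ T : Lp ℂ 2 μ →ₗᵢ[ℂ] H,
      (∀ n m : ℕ, ∀ h : MemLp (fun z : ℂ => z ^ n * (starRingEnd ℂ z) ^ m) 2 μ,
        T (h.toLp _) = (A ^ n) (((ContinuousLinearMap.adjoint A) ^ m) g)) ∧
      Set.range ⇑T
        = ((Submodule.span ℂ (Set.range fun k : ℕ => (A ^ k) g)).topologicalClosure : Set H) := by
  have hs : IsCompact (spectrum ℂ A) := spectrum.isCompact A
  have hμ : ∀ᵐ z ∂μ, z ∈ spectrum ℂ A := ae_iff.2 hμsupp
  let u i := ContinuousMap.toLpOfAEMem 2 μ ℂ hs hμ (starMonomial (ContinuousMap.id ℂ) i)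
  have hgram : ∀ i j, inner ℂ (u i) (u j) = inner ℂ (starMonomial A i g) (starMonomial A j g) := by
    intro i j
    calc inner ℂ (u i) (u j)
        = ∫ z, (star (starMonomial (ContinuousMap.id ℂ) i) *
            starMonomial (ContinuousMap.id ℂ) j) z ∂μ := by
          rw [ContinuousMap.inner_toLpOfAEMem]
          simp [RCLike.inner_apply, mul_comm]
      _ = inner ℂ g ((star (starMonomial A i) * starMonomial A j) g) := by
        rw [star_starMonomial_mul_starMonomial (x := ContinuousMap.id ℂ) (Commute.all _ _),
          star_starMonomial_mul_starMonomial hnormal.star_comm_self]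
        simp only [starMonomial_id_apply, hμmom]
        rw [starMonomial, ContinuousLinearMap.star_eq_adjoint]
      _ = inner ℂ (starMonomial A i g) (starMonomial A j g) := by
        rw [mul_apply_eq_comp, ContinuousLinearMap.star_eq_adjoint,
          ContinuousLinearMap.adjoint_inner_right]
  obtain ⟨T, hTu, hTrange⟩ := exists_linearIsometry_of_inner_eq
    (dense_span_toLpOfAEMem_starMonomial (p := 2) ENNReal.ofNat_ne_top hs hμ) hgram
  refine ⟨T, fun n m h => ?_, ?_⟩
  · have hu : h.toLp _ = u (n, m) :=
      MemLp.toLp_congr h (ContinuousMap.memLp_of_ae_mem _ hs hμ)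
        (Eventually.of_forall fun z => (starMonomial_id_apply (n, m) z).symm)
    rw [hu, hTu, starMonomial, ContinuousLinearMap.star_eq_adjoint]
    rfl
  · rw [hTrange, topologicalClosure_coe, closure_span_starMonomial_apply_eq hred₁ hred₂]
end

section
/- Let A be a bounded normal operator on a complex Hilbert space H with projection-valued spectral measure E, let g ∈ H, and let μ_g(Ω) = ⟨E(Ω)g, g⟩. Suppose the map f ↦ f(A)g (spectral functional calculus) is an isomorphism from L²(σ(A), μ_g) onto the closure of the Krylov subspace K(A,g). Then A is K(A,g)-reduced, i.e., both the closure of K(A,g) and K(A,g)^⊥ are invariant under A. -/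
/-!
The closure of the Krylov subspace `K` is `A`-invariant because `K` is. For `Kᗮ` it suffices that
the closure of `K` is also `A*`-invariant. The isometry sends the class of `z ↦ conj z` to `A* g`,
so `A* g` lies in the closure of `K`, and normality turns `A* (Aᵏ g)` into `Aᵏ (A* g)`.
-/

open Filter Topology MeasureTheory

open Module.End ContinuousLinearMap

theorem Continuous.memLp_of_ae_mem_isCompact {α E : Type*} [TopologicalSpace α]
    [MeasurableSpace α] [OpensMeasurableSpace α] [NormedAddCommGroup E]
    [SecondCountableTopologyEither α E] {μ : Measure α} [IsFiniteMeasure μ] {s : Set α}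
    (hs : IsCompact s) (hμs : ∀ᵐ x ∂μ, x ∈ s) {f : α → E} (hf : Continuous f)
    (p : ENNReal) : MemLp f p μ := by
  obtain ⟨C, hC⟩ := hs.exists_bound_of_continuousOn hf.continuousOn
  exact MemLp.of_bound hf.aestronglyMeasurable C (hμs.mono hC)

section Krylov

variable {R M : Type*} [Semiring R] [AddCommMonoid M] [TopologicalSpace M] [Module R M]

theorem span_range_pow_apply_mem_invtSubmodule (A : M →L[R] M) (g : M) :
    Submodule.span R (Set.range fun k : ℕ => (A ^ k) g) ∈ invtSubmodule (A : M →ₗ[R] M) := by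
  rw [mem_invtSubmodule, Submodule.span_le]
  rintro _ ⟨k, rfl⟩
  exact Submodule.subset_span ⟨k + 1, by simp [pow_succ']⟩

theorem topologicalClosure_span_range_pow_apply_mem_invtSubmodule_of_commute
    [TopologicalSpace R] [ContinuousAdd M] [ContinuousSMul R M] {A B : M →L[R] M}
    (hAB : Commute A B) {g : M}
    (hBg : B g ∈ (Submodule.span R (Set.range fun k : ℕ => (A ^ k) g)).topologicalClosure) :
    (Submodule.span R (Set.range fun k : ℕ => (A ^ k) g)).topologicalClosure
      ∈ invtSubmodule (B : M →ₗ[R] M) := by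
  set K := Submodule.span R (Set.range fun k : ℕ => (A ^ k) g)
  have hKA : K.topologicalClosure ∈ invtSubmodule (A : M →ₗ[R] M) :=
    K.topologicalClosure_mem_invtSubmodule (span_range_pow_apply_mem_invtSubmodule A g)
  have hKB : K ≤ K.topologicalClosure.comap (B : M →ₗ[R] M) := by
    rw [Submodule.span_le]
    rintro _ ⟨k, rfl⟩
    have hcomm : B ((A ^ k) g) = (A ^ k) (B g) := DFunLike.congr_fun (hAB.pow_left k).eq.symm g
    show B ((A ^ k) g) ∈ K.topologicalClosure
    rw [hcomm]
    have := pow_apply_mem_of_forall_mem k hKA (B g) hBg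
    rwa [← toLinearMap_pow, coe_coe] at this
  rw [mem_invtSubmodule]
  exact K.topologicalClosure_minimal hKB
    (K.isClosed_topologicalClosure.preimage B.continuous)

end Krylov

theorem krylov_reduced_of_L2_isomorphism_general
    {H : Type*} [NormedAddCommGroup H] [InnerProductSpace ℂ H] [CompleteSpace H]
    (A : H →L[ℂ] H) (hnormal : IsStarNormal A) (g : H)
    (μ : Measure ℂ) [IsFiniteMeasure μ]
    (hμsupp : μ (spectrum ℂ A)ᶜ = 0)
    (T : Lp ℂ 2 μ →ₗᵢ[ℂ] H)
    (hT : ∀ n m : ℕ, ∀ h : MemLp (fun z : ℂ => z ^ n * (starRingEnd ℂ z) ^ m) 2 μ,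
      T (h.toLp _) = (A ^ n) (((ContinuousLinearMap.adjoint A) ^ m) g))
    (hTrange : Set.range ⇑T
      = ((Submodule.span ℂ (Set.range fun k : ℕ => (A ^ k) g)).topologicalClosure : Set H)) :
    (∀ x ∈ (Submodule.span ℂ (Set.range fun k : ℕ => (A ^ k) g)).topologicalClosure,
      A x ∈ (Submodule.span ℂ (Set.range fun k : ℕ => (A ^ k) g)).topologicalClosure) ∧
    (∀ x ∈ (Submodule.span ℂ (Set.range fun k : ℕ => (A ^ k) g))ᗮ,
      A x ∈ (Submodule.span ℂ (Set.range fun k : ℕ => (A ^ k) g))ᗮ) := by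
  set K := Submodule.span ℂ (Set.range fun k : ℕ => (A ^ k) g)
  have hconj : MemLp (fun z : ℂ => z ^ 0 * (starRingEnd ℂ z) ^ 1) 2 μ :=
    Continuous.memLp_of_ae_mem_isCompact (spectrum.isCompact A) (mem_ae_iff.mpr hμsupp)
      (by fun_prop) 2
  have hadj_g : adjoint A g ∈ K.topologicalClosure := by
    rw [← SetLike.mem_coe, ← hTrange]
    exact ⟨_, by simpa using hT 0 1 hconj⟩
  have hcomm : Commute A (adjoint A) := (star_eq_adjoint A ▸ hnormal.star_comm_self).symm
  have hKA : K.topologicalClosure ∈ invtSubmodule (A : H →ₗ[ℂ] H) :=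
    K.topologicalClosure_mem_invtSubmodule (span_range_pow_apply_mem_invtSubmodule A g)
  have hKadj : K.topologicalClosure ∈ invtSubmodule (adjoint A : H →ₗ[ℂ] H) :=
    topologicalClosure_span_range_pow_apply_mem_invtSubmodule_of_commute hcomm hadj_g
  refine ⟨fun x hx => hKA hx, fun x hx => ?_⟩
  rw [← Submodule.orthogonal_closure] at hx ⊢
  exact orthogonal_mem_invtSubmodule hKadj hx

/-- Let `A` be a bounded normal operator on a complex Hilbert space,
`g ∈ H`, and let `μ` be the scalar spectral measure `μ_g(Ω) = ⟨E(Ω)g, g⟩` of `A` at `g`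
(characterized by its support in `σ(A)` and its moments).  Suppose the spectral-calculus map
`f ↦ f(A)g` (the linear isometry `T` sending the class of `zⁿ conj(z)ᵐ` to `Aⁿ(A*)ᵐ g`) is
an isomorphism from `L²(σ(A), μ_g)` onto the closure of the Krylov subspace
`K(A,g) = span{A^k g : k ∈ ℕ}`.  Then `A` is `K(A,g)`-reduced: both the closure of `K(A,g)`
and `K(A,g)^⊥` are invariant under `A`. -/
theorem krylov_reduced_of_L2_isomorphism
    {H : Type*} [NormedAddCommGroup H] [InnerProductSpace ℂ H] [CompleteSpace H]
    (A : H →L[ℂ] H) (hnormal : IsStarNormal A) (g : H)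
    (μ : Measure ℂ) [IsFiniteMeasure μ]
    (hμsupp : μ (spectrum ℂ A)ᶜ = 0)
    (hμmom : ∀ n m : ℕ,
      ∫ z : ℂ, z ^ n * (starRingEnd ℂ z) ^ m ∂μ
        = @inner ℂ _ _ g (((A ^ n) * ((ContinuousLinearMap.adjoint A) ^ m)) g))
    (T : Lp ℂ 2 μ →ₗᵢ[ℂ] H)
    (hT : ∀ n m : ℕ, ∀ h : MemLp (fun z : ℂ => z ^ n * (starRingEnd ℂ z) ^ m) 2 μ,
      T (h.toLp _) = (A ^ n) (((ContinuousLinearMap.adjoint A) ^ m) g))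
    (hTrange : Set.range ⇑T
      = ((Submodule.span ℂ (Set.range fun k : ℕ => (A ^ k) g)).topologicalClosure : Set H)) :
    (∀ x ∈ (Submodule.span ℂ (Set.range fun k : ℕ => (A ^ k) g)).topologicalClosure,
      A x ∈ (Submodule.span ℂ (Set.range fun k : ℕ => (A ^ k) g)).topologicalClosure) ∧
    (∀ x ∈ (Submodule.span ℂ (Set.range fun k : ℕ => (A ^ k) g))ᗮ,
      A x ∈ (Submodule.span ℂ (Set.range fun k : ℕ => (A ^ k) g))ᗮ) :=
  krylov_reduced_of_L2_isomorphism_general A hnormal g μ hμsupp T hT hTrange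
end
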